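/- Let L be a Lie superalgebra and δ : L × L → L a super-biderivation of degree |δ|. Then for all homogeneous x, y, u, v ∈ L: [δ(x,y), [u,v]] = (-1)^{|δ|(|x|+|y|)}[[x,y], δ(u,v)]. -/
import Mathlib


/-- The sign `(-1)^(i*j)` for degrees `i j : ZMod 2`, as an element of the field `F`. -/
def ssign (F : Type*) [Field F] (i j : ZMod 2) : F :=
  if i * j = 1 then -1 else 1

/-- A Lie superalgebra structure on an `F`-module `L`: a bilinear bracket together with a
`ZMod 2`-grading by submodules, such that the bracket is graded, super-skewsymmetric and
satisfies the super Jacobi identity on homogeneous elements. -/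
structure LieSuperAlg (F : Type*) [Field F] (L : Type*) [AddCommGroup L] [Module F L] where
  br : L → L → L
  br_add_left : ∀ x y z : L, br (x + y) z = br x z + br y z
  br_smul_left : ∀ (c : F) (x z : L), br (c • x) z = c • br x z
  br_add_right : ∀ x y z : L, br x (y + z) = br x y + br x z
  br_smul_right : ∀ (c : F) (x z : L), br x (c • z) = c • br x z
  G : ZMod 2 → Submodule F L
  isInternal : DirectSum.IsInternal G
  br_deg : ∀ {i j : ZMod 2} {x y : L}, x ∈ G i → y ∈ G j → br x y ∈ G (i + j)
  super_skew : ∀ {i j : ZMod 2} {x y : L}, x ∈ G i → y ∈ G j →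
    br x y = -(ssign F i j • br y x)
  super_jacobi : ∀ {i j k : ZMod 2} {x y z : L}, x ∈ G i → y ∈ G j → z ∈ G k →
    br x (br y z) = br (br x y) z + ssign F i j • br y (br x z)

variable {F : Type*} [Field F] {L : Type*} [AddCommGroup L] [Module F L]

/-- `δ : L × L → L` is a super-biderivation of degree `τ`. -/
structure IsSuperBiderivation (A : LieSuperAlg F L) (τ : ZMod 2) (δ : L → L → L) : Prop where
  add_left : ∀ x y z : L, δ (x + y) z = δ x z + δ y z
  smul_left : ∀ (c : F) (x z : L), δ (c • x) z = c • δ x z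
  add_right : ∀ x y z : L, δ x (y + z) = δ x y + δ x z
  smul_right : ∀ (c : F) (x z : L), δ x (c • z) = c • δ x z
  deg : ∀ {i j : ZMod 2} {x y : L}, x ∈ A.G i → y ∈ A.G j → δ x y ∈ A.G (i + j + τ)
  skew : ∀ {i j : ZMod 2} {x y : L}, x ∈ A.G i → y ∈ A.G j →
    δ x y = -(ssign F i j • δ y x)
  leibniz : ∀ {i j k : ZMod 2} {x y z : L}, x ∈ A.G i → y ∈ A.G j → z ∈ A.G k →
    δ (A.br x y) z = ssign F τ i • A.br x (δ y z) + ssign F j k • A.br (δ x z) y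

/-- `f : L → L` is an even linear super-commuting map. -/
structure IsSuperCommuting (A : LieSuperAlg F L) (f : L → L) : Prop where
  map_add : ∀ x y : L, f (x + y) = f x + f y
  map_smul : ∀ (c : F) (x : L), f (c • x) = c • f x
  even : ∀ {i : ZMod 2} {x : L}, x ∈ A.G i → f x ∈ A.G i
  comm : ∀ x y : L, A.br (f x) y = A.br x (f y)

/-- `γ : L → L` is a homogeneous element of the centroid `Γ(L)`, of degree `τ`. -/
structure InCentroid (A : LieSuperAlg F L) (τ : ZMod 2) (γ : L → L) : Prop where
  map_add : ∀ x y : L, γ (x + y) = γ x + γ y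
  map_smul : ∀ (c : F) (x : L), γ (c • x) = c • γ x
  deg : ∀ {i : ZMod 2} {x : L}, x ∈ A.G i → γ x ∈ A.G (i + τ)
  centroid : ∀ {i j : ZMod 2} {x y : L}, x ∈ A.G i → y ∈ A.G j →
    γ (A.br x y) = ssign F τ i • A.br x (γ y)

/-- The derived subalgebra `L' = [L, L]`, the span of all brackets. -/
def derived (A : LieSuperAlg F L) : Submodule F L :=
  Submodule.span F {z : L | ∃ x y : L, z = A.br x y}

/-- The center `Z(L)` as a submodule. -/
def centerSub (A : LieSuperAlg F L) : Submodule F L where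
  carrier := {v : L | ∀ x : L, A.br x v = 0}
  add_mem' := by
    intro a b ha hb x
    rw [A.br_add_right, ha x, hb x, add_zero]
  zero_mem' := by
    intro x
    simpa using A.br_smul_right (0 : F) x 0
  smul_mem' := by
    intro c a ha x
    rw [A.br_smul_right, ha x, smul_zero]


lemma br_neg_left (A : LieSuperAlg F L) (x z : L) : A.br (-x) z = -A.br x z := by
  simpa using A.br_smul_left (-1) x z

lemma br_neg_right (A : LieSuperAlg F L) (x z : L) : A.br x (-z) = -A.br x z := by
  simpa using A.br_smul_right (-1) x z

/-- Second-slot Leibniz rule for a super-biderivation, derived from super-skewsymmetry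
and the first-slot Leibniz rule. -/
lemma leib2 {A : LieSuperAlg F L} {τ : ZMod 2} {δ : L → L → L}
    (hδ : IsSuperBiderivation A τ δ) {m p q : ZMod 2} {z a b : L}
    (hz : z ∈ A.G m) (ha : a ∈ A.G p) (hb : b ∈ A.G q) :
    δ z (A.br a b) = ssign F (m+τ) p • A.br a (δ z b) + A.br (δ z a) b := by
  have h1 := hδ.skew hz (A.br_deg ha hb)
  rw [hδ.leibniz ha hb hz, hδ.skew ha hz, hδ.skew hb hz] at h1
  rw [h1]
  simp only [br_neg_right, br_neg_left, A.br_smul_right, A.br_smul_left, smul_neg, neg_neg,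
    smul_add, smul_smul]
  match_scalars <;> fin_cases m <;> fin_cases p <;> fin_cases q <;> fin_cases τ <;>
    simp (config := { decide := true }) [ssign]

set_option maxHeartbeats 3200000 in
/-- The fundamental "star" identity obtained by computing `δ([x,y],[u,v])` in two ways. -/
lemma star {A : LieSuperAlg F L} {τ : ZMod 2} {δ : L → L → L}
    (hδ : IsSuperBiderivation A τ δ) {i j k l : ZMod 2} {x y u v : L}
    (hx : x ∈ A.G i) (hy : y ∈ A.G j) (hu : u ∈ A.G k) (hv : v ∈ A.G l) :
    (ssign F i j * ssign F i l * ssign F k l) • A.br (δ y v) (A.br x u)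
    + (ssign F j k * ssign F j l * ssign F k l) • A.br (δ x v) (A.br u y)
    + ssign F j k • A.br (δ x u) (A.br y v)
    = (ssign F i j * ssign F i k) • A.br (δ y u) (A.br x v) := by
  have hxy := A.br_deg hx hy
  have huv := A.br_deg hu hv
  have hA := hδ.deg hy hv
  have hB := hδ.deg hy hu
  have hC := hδ.deg hx hv
  have hD := hδ.deg hx hu
  have way1 := hδ.leibniz hx hy huv
  rw [leib2 hδ hy hu hv, leib2 hδ hx hu hv] at way1
  simp only [A.br_add_right, A.br_smul_right, A.br_add_left, A.br_smul_left, smul_add,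
    smul_smul] at way1
  have way2 := leib2 hδ hxy hu hv
  rw [hδ.leibniz hx hy hv, hδ.leibniz hx hy hu] at way2
  simp only [A.br_add_right, A.br_smul_right, A.br_add_left, A.br_smul_left, smul_add,
    smul_smul] at way2
  have W := way1.symm.trans way2
  have J1 := A.super_jacobi hx hu hA
  have K1 := A.super_skew (A.br_deg hx hu) hA
  have J2 := A.super_jacobi hx hB hv
  have J3 := A.super_jacobi hu hC hy
  have J4 := A.super_jacobi hD hv hy
  have K2 := A.super_skew hv (A.br_deg hD hy)
  have K3' : A.br (δ x u) (A.br v y) = -(ssign F l j • A.br (δ x u) (A.br y v)) := by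
    rw [A.super_skew hv hy, br_neg_right, A.br_smul_right]
  linear_combination (norm := skip)
    (-1 : F) • W
    + (ssign F τ i * ssign F (j+τ) k) • J1
    + (ssign F τ i * ssign F (j+τ) k) • K1
    + (ssign F τ i) • J2
    + (-(ssign F j (k+l) * ssign F (i+τ) k)) • J3
    + (-(ssign F j (k+l))) • J4
    + (-(ssign F j (k+l) * ssign F (i+k+τ) l)) • K2
    + (ssign F j (k+l)) • K3'
  match_scalars <;> fin_cases i <;> fin_cases j <;> fin_cases k <;> fin_cases l <;> fin_cases τ <;>
    simp (config := { decide := true }) [ssign]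

set_option maxHeartbeats 3200000 in
theorem stmt2 (h2 : (2 : F) ≠ 0) (A : LieSuperAlg F L) (τ : ZMod 2) (δ : L → L → L)
    (hδ : IsSuperBiderivation A τ δ) {i j k l : ZMod 2} {x y u v : L}
    (hx : x ∈ A.G i) (hy : y ∈ A.G j) (hu : u ∈ A.G k) (hv : v ∈ A.G l) :
    A.br (δ x y) (A.br u v) = ssign F τ (i + j) • A.br (A.br x y) (δ u v) := by
  have hxy := A.br_deg hx hy
  have S1 := star hδ hx hu hy hv
  have S2 := star hδ hy hx hu hv
  have S3 := star hδ hu hy hx hv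
  rw [hδ.skew hu hy, A.super_skew hy hu] at S1
  rw [A.super_skew hy hu, A.super_skew hu hx] at S2
  rw [A.super_skew hu hx, hδ.skew hu hx, hδ.skew hy hx] at S3
  simp only [br_neg_left, br_neg_right, A.br_smul_left, A.br_smul_right, smul_neg, smul_smul,
    neg_neg] at S1 S2 S3
  have key : (2:F) • A.br (δ x y) (A.br u v)
      = (2:F) • (ssign F τ (i + j) • A.br (A.br x y) (δ u v)) := by
    rw [A.super_skew hxy (hδ.deg hu hv)]
    linear_combination (norm := skip)
      (ssign F j k) • S1 + (-(ssign F i j)) • S2 + (ssign F i j * ssign F i k * ssign F j k) • S3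
    match_scalars <;> fin_cases i <;> fin_cases j <;> fin_cases k <;> fin_cases l <;>
      fin_cases τ <;> simp (config := { decide := true }) [ssign] <;> ring
  have := congrArg (fun t => (2:F)⁻¹ • t) key
  simpa [smul_smul, ← mul_assoc, inv_mul_cancel₀ h2] using this
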